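/- arXiv:math/0502390 — 4 statements merged into one kernel-verified Lean document; each statement's English description precedes it below -/
import Mathlib

section
/- Let s, r > 0 with r = s·e^t for some real t. Then log((1+r)/(1+s)) = t/(1 + 1/s) + O(t²), i.e. there exists a constant C (depending only on a bound B ≥ 1 with B^{-1} ≤ s ≤ B and |t| ≤ 1) such that |log((1+r)/(1+s)) - t/(1+s^{-1})| ≤ C·t². -/
/-- Second order estimate: for `r = s * exp t` with `B⁻¹ ≤ s ≤ B` and `|t| ≤ 1`,
`log ((1+r)/(1+s)) = t/(1 + s⁻¹) + O(t²)` with a constant depending only on `B`. -/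
theorem stmt_5 (B : ℝ) (hB : 1 ≤ B) :
    ∃ C : ℝ, 0 ≤ C ∧
      ∀ s t : ℝ, B⁻¹ ≤ s → s ≤ B → |t| ≤ 1 →
        |Real.log ((1 + s * Real.exp t) / (1 + s)) - t / (1 + s⁻¹)| ≤ C * t ^ 2 := by
  refine ⟨1/4, by norm_num, ?_⟩
  intro s t hs1 hs2 ht
  have hs0 : 0 < s := lt_of_lt_of_le (by positivity) hs1
  have hd : ∀ τ : ℝ, 0 < 1 + s * Real.exp τ := fun τ => by positivity
  -- h τ = s e^τ/(1+s e^τ)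
  have hh : ∀ τ : ℝ, HasDerivAt (fun τ => s * Real.exp τ / (1 + s * Real.exp τ))
      (s * Real.exp τ / (1 + s * Real.exp τ) ^ 2) τ := by
    intro τ
    have h1 : HasDerivAt (fun τ => s * Real.exp τ) (s * Real.exp τ) τ :=
      (Real.hasDerivAt_exp τ).const_mul s
    have h2 : HasDerivAt (fun τ => 1 + s * Real.exp τ) (s * Real.exp τ) τ :=
      h1.const_add 1
    have := h1.div h2 (ne_of_gt (hd τ))
    refine this.congr_deriv ?_
    ring
  have hbound : ∀ τ : ℝ, ‖s * Real.exp τ / (1 + s * Real.exp τ) ^ 2‖ ≤ 1/4 := by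
    intro τ
    have hu : 0 < s * Real.exp τ := by positivity
    rw [Real.norm_eq_abs, abs_of_nonneg (by positivity)]
    rw [div_le_iff₀ (by positivity)]
    nlinarith [sq_nonneg (1 - s * Real.exp τ)]
  -- inner MVT
  have inner : ∀ τ : ℝ,
      |s * Real.exp τ / (1 + s * Real.exp τ) - s / (1 + s)| ≤ 1/4 * |τ| := by
    intro τ
    have := convex_univ.norm_image_sub_le_of_norm_hasDerivWithin_le
      (f := fun τ => s * Real.exp τ / (1 + s * Real.exp τ))
      (f' := fun τ => s * Real.exp τ / (1 + s * Real.exp τ) ^ 2)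
      (fun x _ => (hh x).hasDerivWithinAt) (fun x _ => hbound x)
      (Set.mem_univ 0) (Set.mem_univ τ)
    simpa [Real.norm_eq_abs, Real.exp_zero] using this
  -- outer function g
  have hg : ∀ τ : ℝ, HasDerivAt
      (fun τ => Real.log (1 + s * Real.exp τ) - τ * (s / (1 + s)))
      (s * Real.exp τ / (1 + s * Real.exp τ) - s / (1 + s)) τ := by
    intro τ
    have h2 : HasDerivAt (fun τ => 1 + s * Real.exp τ) (s * Real.exp τ) τ :=
      ((Real.hasDerivAt_exp τ).const_mul s).const_add 1
    have hl := h2.log (ne_of_gt (hd τ))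
    have hm : HasDerivAt (fun τ : ℝ => τ * (s / (1 + s))) (s / (1 + s)) τ := by
      simpa using (hasDerivAt_id τ).mul_const (s / (1 + s))
    exact hl.sub hm
  have hgbound : ∀ τ ∈ Set.uIcc (0:ℝ) t,
      ‖s * Real.exp τ / (1 + s * Real.exp τ) - s / (1 + s)‖ ≤ 1/4 * |t| := by
    intro τ hτ
    have hτt : |τ| ≤ |t| := by
      rw [Set.uIcc_eq_union] at hτ
      rw [abs_le]
      rcases hτ with h | h <;> rw [Set.mem_Icc] at h <;>
        cases abs_cases t <;> constructor <;> linarith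
    calc ‖s * Real.exp τ / (1 + s * Real.exp τ) - s / (1 + s)‖ ≤ 1/4 * |τ| := inner τ
      _ ≤ 1/4 * |t| := by linarith
  have outer := (convex_uIcc (0:ℝ) t).norm_image_sub_le_of_norm_hasDerivWithin_le
    (fun x _ => (hg x).hasDerivWithinAt) hgbound
    Set.left_mem_uIcc Set.right_mem_uIcc
  simp only [Real.norm_eq_abs, Real.exp_zero, mul_one, zero_mul, sub_zero] at outer
  have hrw : Real.log ((1 + s * Real.exp t) / (1 + s)) - t / (1 + s⁻¹)
      = (Real.log (1 + s * Real.exp t) - t * (s / (1 + s))) - (Real.log (1 + s) - 0 * (s / (1 + s))) := by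
    rw [Real.log_div (ne_of_gt (hd t)) (ne_of_gt (by positivity))]
    have h1 : 1 + s⁻¹ = (1 + s) / s := by field_simp; ring
    have : t / (1 + s⁻¹) = t * (s / (1 + s)) := by
      rw [h1, div_div_eq_mul_div, mul_div_assoc]
    rw [this]; ring
  have hrw2 : (Real.log (1 + s * Real.exp t) - t * (s / (1 + s))) - (Real.log (1 + s) - 0 * (s / (1 + s)))
      = Real.log (1 + s * Real.exp t) - t * (s / (1 + s)) - Real.log (1 + s) := by ring
  rw [hrw, hrw2]
  calc |Real.log (1 + s * Real.exp t) - t * (s / (1 + s)) - Real.log (1 + s)|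
      ≤ 1/4 * |t| * |t| := outer
    _ = 1/4 * t ^ 2 := by rw [mul_assoc, ← sq_abs t]; ring
end

section
/- Let h : I → J be a differentiable map of compact real intervals with derivative dh that is r-Hölder continuous for some 0 < r ≤ 1, and dh(x) ≥ c > 0 for all x. Then for any two adjacent subintervals A = [x−δ₁, x] and B = [x, x+δ₂] of I, |log( (|h(B)|/|B|) / (|h(A)|/|A|) )| ≤ C·(δ₁+δ₂)^r for a constant C depending only on the Hölder constant of dh, on c, and on r. -/
lemma log_abs_sub_le (c u v : ℝ) (hc : 0 < c) (hu : c ≤ u) (hv : c ≤ v) :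
    |Real.log u - Real.log v| ≤ |u - v| / c := by
  have key : ∀ p q : ℝ, c ≤ p → c ≤ q → Real.log p - Real.log q ≤ |p - q| / c := by
    intro p q hp hq
    have hp0 : 0 < p := lt_of_lt_of_le hc hp
    have hq0 : 0 < q := lt_of_lt_of_le hc hq
    rw [← Real.log_div hp0.ne' hq0.ne']
    calc Real.log (p / q) ≤ p / q - 1 := Real.log_le_sub_one_of_pos (div_pos hp0 hq0)
      _ = (p - q) / q := by field_simp
      _ ≤ |p - q| / c := div_le_div₀ (abs_nonneg _) (le_abs_self _) hc hq
  rw [abs_sub_le_iff]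
  refine ⟨key u v hu hv, ?_⟩
  have := key v u hv hu
  rwa [abs_sub_comm] at this

/-- If `h` has an `r`-Hölder continuous derivative bounded below by `c > 0` on a
compact interval, then the logarithmic ratio distortion of two adjacent
subintervals `[x-δ₁, x]`, `[x, x+δ₂]` is `O((δ₁+δ₂)^r)`, with a constant depending
only on the Hölder constant `H`, on `c`, and on `r`. -/
theorem stmt_10 (r c H : ℝ) (hr0 : 0 < r) (hr1 : r ≤ 1) (hc : 0 < c) (hH : 0 ≤ H) :
    ∃ C : ℝ, 0 ≤ C ∧
      ∀ (a b : ℝ) (h dh : ℝ → ℝ),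
        (∀ x ∈ Set.Icc a b, HasDerivAt h (dh x) x) →
        (∀ x ∈ Set.Icc a b, ∀ y ∈ Set.Icc a b, |dh y - dh x| ≤ H * |y - x| ^ r) →
        (∀ x ∈ Set.Icc a b, c ≤ dh x) →
        ∀ x δ₁ δ₂ : ℝ, 0 < δ₁ → 0 < δ₂ → a ≤ x - δ₁ → x + δ₂ ≤ b →
          |Real.log (((h (x + δ₂) - h x) / δ₂) / ((h x - h (x - δ₁)) / δ₁))| ≤
            C * (δ₁ + δ₂) ^ r := by
  refine ⟨H / c, div_nonneg hH hc.le, ?_⟩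
  intro a b h dh hderiv hHold hlow x δ₁ δ₂ hδ₁ hδ₂ ha hb
  have hsub1 : Set.Icc (x - δ₁) x ⊆ Set.Icc a b := by
    apply Set.Icc_subset_Icc ha
    linarith
  have hsub2 : Set.Icc x (x + δ₂) ⊆ Set.Icc a b := by
    apply Set.Icc_subset_Icc _ hb
    linarith
  have hcont : ∀ s : Set ℝ, s ⊆ Set.Icc a b → ContinuousOn h s := by
    intro s hs y hy
    exact ((hderiv y (hs hy)).continuousAt).continuousWithinAt
  -- MVT on [x - δ₁, x]
  obtain ⟨ξ₁, hξ₁mem, hξ₁⟩ := exists_hasDerivAt_eq_slope h dh (by linarith : x - δ₁ < x)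
    (hcont _ hsub1) (fun y hy => hderiv y (hsub1 (Set.Ioo_subset_Icc_self hy)))
  obtain ⟨ξ₂, hξ₂mem, hξ₂⟩ := exists_hasDerivAt_eq_slope h dh (by linarith : x < x + δ₂)
    (hcont _ hsub2) (fun y hy => hderiv y (hsub2 (Set.Ioo_subset_Icc_self hy)))
  have hξ₁I : ξ₁ ∈ Set.Icc a b := hsub1 (Set.Ioo_subset_Icc_self hξ₁mem)
  have hξ₂I : ξ₂ ∈ Set.Icc a b := hsub2 (Set.Ioo_subset_Icc_self hξ₂mem)
  have e1 : (h x - h (x - δ₁)) / δ₁ = dh ξ₁ := by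
    rw [hξ₁]; ring_nf
  have e2 : (h (x + δ₂) - h x) / δ₂ = dh ξ₂ := by
    rw [hξ₂]; ring_nf
  rw [e1, e2]
  have h1c : c ≤ dh ξ₁ := hlow _ hξ₁I
  have h2c : c ≤ dh ξ₂ := hlow _ hξ₂I
  have h10 : (0:ℝ) < dh ξ₁ := lt_of_lt_of_le hc h1c
  have h20 : (0:ℝ) < dh ξ₂ := lt_of_lt_of_le hc h2c
  rw [Real.log_div h20.ne' h10.ne']
  have hdist : |ξ₂ - ξ₁| ≤ δ₁ + δ₂ := by
    rw [abs_le]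
    obtain ⟨l1, r1⟩ := hξ₁mem
    obtain ⟨l2, r2⟩ := hξ₂mem
    constructor <;> linarith
  have hrpow : |ξ₂ - ξ₁| ^ r ≤ (δ₁ + δ₂) ^ r :=
    Real.rpow_le_rpow (abs_nonneg _) hdist hr0.le
  calc |Real.log (dh ξ₂) - Real.log (dh ξ₁)| ≤ |dh ξ₂ - dh ξ₁| / c :=
        log_abs_sub_le c _ _ hc h2c h1c
    _ ≤ (H * |ξ₂ - ξ₁| ^ r) / c := by
        gcongr
        exact hHold ξ₁ hξ₁I ξ₂ hξ₂I
    _ ≤ (H * (δ₁ + δ₂) ^ r) / c := by gcongr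
    _ = H / c * (δ₁ + δ₂) ^ r := by ring
end

section
/- Let h : I → J be a homeomorphism of compact intervals with a (B,M)-grid on I such that for all levels n and adjacent grid intervals, |lrd(n,β)| ≤ γ_n where γ_n → 0 as n → ∞. Then for every pair of adjacent grid intervals, k^{-1} ≤ r_h(n,β)/r(n,β) ≤ k for some k ≥ 1 and all n, β; in particular h is quasisymmetric. -/
/-- A `(B,M)`-grid of the compact interval `[a,b]`, described by its endpoints
`p n 0 < p n 1 < ⋯ < p n (Ω n)` at each level `n`.  The grid intervals at level `n`
are `I^n_β = [p n β, p n (β+1)]` for `β < Ω n`. -/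
structure BMGrid (B : ℝ) (M : ℕ) (a b : ℝ) where
  /-- number of grid intervals at level `n` -/
  Ω : ℕ → ℕ
  Ωpos : ∀ n, 0 < Ω n
  /-- endpoints of the grid intervals at level `n` -/
  p : ℕ → ℕ → ℝ
  left : ∀ n, p n 0 = a
  right : ∀ n, p n (Ω n) = b
  mono : ∀ n i, i < Ω n → p n i < p n (i + 1)
  ratio_lb : ∀ n i, i + 1 < Ω n →
    B⁻¹ ≤ (p n (i + 2) - p n (i + 1)) / (p n (i + 1) - p n i)
  ratio_ub : ∀ n i, i + 1 < Ω n →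
    (p n (i + 2) - p n (i + 1)) / (p n (i + 1) - p n i) ≤ B
  nested : ∀ n i, i ≤ Ω n → ∃ j, j ≤ Ω (n + 1) ∧ p (n + 1) j = p n i
  children : ∀ n i, i < Ω n → ∃ j j', j ≤ Ω (n + 1) ∧ j' ≤ Ω (n + 1) ∧
    p (n + 1) j = p n i ∧ p (n + 1) j' = p n (i + 1) ∧ 2 ≤ j' - j ∧ j' - j ≤ M

namespace BMGridAux

variable {B : ℝ} {M : ℕ} {a b : ℝ}

lemma p_lt (G : BMGrid B M a b) {n i j : ℕ} (hij : i < j) (hj : j ≤ G.Ω n) :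
    G.p n i < G.p n j := by
  induction j with
  | zero => omega
  | succ j ih =>
    rcases Nat.lt_or_ge i j with hij' | hij'
    · exact lt_trans (ih hij' (by omega)) (G.mono n j (by omega))
    · have : i = j := by omega
      subst this; exact G.mono n i (by omega)

lemma p_le (G : BMGrid B M a b) {n i j : ℕ} (hij : i ≤ j) (hj : j ≤ G.Ω n) :
    G.p n i ≤ G.p n j := by
  rcases Nat.lt_or_ge i j with hij' | hij'
  · exact le_of_lt (p_lt G hij' hj)
  · have : i = j := by omega
    subst this; exact le_rfl

lemma a_le_p (G : BMGrid B M a b) {n i : ℕ} (hi : i ≤ G.Ω n) : a ≤ G.p n i := by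
  have := p_le G (Nat.zero_le i) hi; rwa [G.left] at this

lemma p_le_b (G : BMGrid B M a b) {n i : ℕ} (hi : i ≤ G.Ω n) : G.p n i ≤ b := by
  have := p_le G hi le_rfl; rwa [G.right] at this

lemma p_mem (G : BMGrid B M a b) {n i : ℕ} (hi : i ≤ G.Ω n) : G.p n i ∈ Set.Icc a b :=
  ⟨a_le_p G hi, p_le_b G hi⟩

lemma a_lt_b (G : BMGrid B M a b) : a < b := by
  have h0 := G.mono 0 0 (G.Ωpos 0)
  have := p_le G (show (1:ℕ) ≤ G.Ω 0 from G.Ωpos 0) le_rfl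
  rw [G.right] at this
  rw [← G.left 0]
  exact lt_of_lt_of_le h0 this

lemma two_le_M (G : BMGrid B M a b) : 2 ≤ M := by
  obtain ⟨j, j', _, _, _, _, h2, hM⟩ := G.children 0 0 (G.Ωpos 0)
  omega

lemma two_le_Ωone (G : BMGrid B M a b) : 2 ≤ G.Ω 1 := by
  obtain ⟨j, j', _, hj', _, _, h2, _⟩ := G.children 0 0 (G.Ωpos 0)
  have e : G.Ω (0+1) = G.Ω 1 := rfl
  omega

lemma one_le_B (G : BMGrid B M a b) : 1 ≤ B := by
  have h2 := two_le_Ωone G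
  have hlb := G.ratio_lb 1 0 (by omega)
  have hub := G.ratio_ub 1 0 (by omega)
  have hr : 0 < (G.p 1 (0+2) - G.p 1 (0+1)) / (G.p 1 (0+1) - G.p 1 0) := by
    apply div_pos <;> [skip; skip] <;>
      [exact sub_pos.2 (G.mono 1 1 (by omega)); exact sub_pos.2 (G.mono 1 0 (by omega))]
  have hB : 0 < B := lt_of_lt_of_le hr hub
  have hBB : B⁻¹ ≤ B := le_trans hlb hub
  have := mul_le_mul_of_nonneg_right hBB hB.le
  rw [inv_mul_cancel₀ hB.ne'] at this
  nlinarith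

/-- the `F`-length of grid interval `I^n_i`. -/
def dlen (G : BMGrid B M a b) (F : ℝ → ℝ) (n i : ℕ) : ℝ := F (G.p n (i+1)) - F (G.p n i)

lemma dlen_pos (G : BMGrid B M a b) {F : ℝ → ℝ} (hF : StrictMonoOn F (Set.Icc a b))
    {n i : ℕ} (hi : i < G.Ω n) : 0 < dlen G F n i :=
  sub_pos.2 (hF (p_mem G (le_of_lt hi)) (p_mem G hi) (G.mono n i hi))

lemma dlen_sum (G : BMGrid B M a b) (F : ℝ → ℝ) (n j c : ℕ) :
    F (G.p n (j+c)) - F (G.p n j) = ∑ t ∈ Finset.range c, dlen G F n (j+t) := by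
  have := Finset.sum_range_sub (f := fun t => F (G.p n (j+t))) c
  simp only [Nat.add_zero] at this
  rw [← this]
  apply Finset.sum_congr rfl
  intro t _
  have : j + (t+1) = (j + t) + 1 := by omega
  rw [this]; rfl

lemma len_adj (G : BMGrid B M a b) {n i : ℕ} (hi : i + 1 < G.Ω n) :
    dlen G id n i ≤ B * dlen G id n (i+1) ∧ dlen G id n (i+1) ≤ B * dlen G id n i := by
  have hB : (0:ℝ) < B := lt_of_lt_of_le one_pos (one_le_B G)
  have h1 : 0 < G.p n (i+1) - G.p n i := sub_pos.2 (G.mono n i (by omega))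
  have h2 : 0 < G.p n (i+2) - G.p n (i+1) := sub_pos.2 (G.mono n (i+1) hi)
  have hlb := G.ratio_lb n i hi
  have hub := G.ratio_ub n i hi
  rw [div_le_iff₀ h1] at hub
  rw [le_div_iff₀ h1] at hlb
  constructor
  · show G.p n (i+1) - G.p n i ≤ B * (G.p n (i+1+1) - G.p n (i+1))
    have e : i + 1 + 1 = i + 2 := by omega
    rw [e]
    have h3 := mul_le_mul_of_nonneg_left hlb hB.le
    rw [← mul_assoc, mul_inv_cancel₀ hB.ne', one_mul] at h3
    linarith
  · show G.p n (i+1+1) - G.p n (i+1) ≤ B * (G.p n (i+1) - G.p n i)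
    have e : i + 1 + 1 = i + 2 := by omega
    rw [e]
    linarith

variable {G : BMGrid B M a b} {F : ℝ → ℝ} {K : ℝ}

lemma chain (hK : 1 ≤ K)
    (hpos : ∀ n i, i < G.Ω n → 0 < dlen G F n i)
    (hadj : ∀ n i, i + 1 < G.Ω n →
      dlen G F n i ≤ K * dlen G F n (i+1) ∧ dlen G F n (i+1) ≤ K * dlen G F n i)
    (s n i : ℕ) (h : i + s < G.Ω n) :
    dlen G F n i ≤ K^s * dlen G F n (i+s) ∧ dlen G F n (i+s) ≤ K^s * dlen G F n i := by
  induction s with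
  | zero => simp
  | succ s ih =>
    have h' : i + s < G.Ω n := by omega
    obtain ⟨ih1, ih2⟩ := ih h'
    have hadj' := hadj n (i+s) (by omega)
    have e : i + s + 1 = i + (s+1) := by omega
    rw [e] at hadj'
    have hp1 := hpos n (i+s) h'
    have hp2 := hpos n (i+(s+1)) (by omega)
    have hKpow : (0:ℝ) ≤ K^s := pow_nonneg (by linarith) s
    constructor
    · calc dlen G F n i ≤ K^s * dlen G F n (i+s) := ih1
        _ ≤ K^s * (K * dlen G F n (i+(s+1))) :=
          mul_le_mul_of_nonneg_left hadj'.1 hKpow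
        _ = K^(s+1) * dlen G F n (i+(s+1)) := by ring
    · calc dlen G F n (i+(s+1)) ≤ K * dlen G F n (i+s) := hadj'.2
        _ ≤ K * (K^s * dlen G F n i) :=
          mul_le_mul_of_nonneg_left ih2 (by linarith)
        _ = K^(s+1) * dlen G F n i := by ring

lemma chain' (hK : 1 ≤ K)
    (hpos : ∀ n i, i < G.Ω n → 0 < dlen G F n i)
    (hadj : ∀ n i, i + 1 < G.Ω n →
      dlen G F n i ≤ K * dlen G F n (i+1) ∧ dlen G F n (i+1) ≤ K * dlen G F n i)
    {n i i' m : ℕ} (hd : i' - i ≤ m ∧ i - i' ≤ m)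
    (hi : i < G.Ω n) (hi' : i' < G.Ω n) :
    dlen G F n i ≤ K^m * dlen G F n i' := by
  have hKpos : (0:ℝ) < K := lt_of_lt_of_le one_pos hK
  rcases Nat.le_total i i' with hle | hle
  · obtain ⟨s, rfl⟩ := Nat.exists_eq_add_of_le hle
    have hch := (chain hK hpos hadj s n i (by omega)).1
    calc dlen G F n i ≤ K^s * dlen G F n (i+s) := hch
      _ ≤ K^m * dlen G F n (i+s) :=
        mul_le_mul_of_nonneg_right (pow_le_pow_right₀ (by linarith) (by omega))
          (hpos n (i+s) (by omega)).le
  · obtain ⟨s, rfl⟩ := Nat.exists_eq_add_of_le hle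
    have hch := (chain hK hpos hadj s n i' (by omega)).2
    calc dlen G F n (i'+s) ≤ K^s * dlen G F n i' := hch
      _ ≤ K^m * dlen G F n i' :=
        mul_le_mul_of_nonneg_right (pow_le_pow_right₀ (by linarith) (by omega))
          (hpos n i' (by omega)).le

lemma child_bounds (hM : 2 ≤ M) (hK : 1 ≤ K)
    (hpos : ∀ n i, i < G.Ω n → 0 < dlen G F n i)
    (hadj : ∀ n i, i + 1 < G.Ω n →
      dlen G F n i ≤ K * dlen G F n (i+1) ∧ dlen G F n (i+1) ≤ K * dlen G F n i)
    {n i j j' t : ℕ} (hi : i < G.Ω n) (hj' : j' ≤ G.Ω (n+1))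
    (hpj : G.p (n+1) j = G.p n i) (hpj' : G.p (n+1) j' = G.p n (i+1))
    (h2 : 2 ≤ j' - j) (hMc : j' - j ≤ M) (ht1 : j ≤ t) (ht2 : t < j') :
    ((M:ℝ) * K^(M-1))⁻¹ * dlen G F n i ≤ dlen G F (n+1) t ∧
      dlen G F (n+1) t ≤ (1 - ((M:ℝ) * K^(M-1))⁻¹) * dlen G F n i := by
  have hKpos : (0:ℝ) < K := lt_of_lt_of_le one_pos hK
  set c := j' - j with hc
  have hjc : j' = j + c := by omega
  have hparent : dlen G F n i = ∑ s ∈ Finset.range c, dlen G F (n+1) (j+s) := by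
    have hds := dlen_sum G F (n+1) j c
    rw [← hjc, hpj, hpj'] at hds
    exact hds
  have htpos : 0 < dlen G F (n+1) t := hpos (n+1) t (by omega)
  have hMK : (0:ℝ) < (M:ℝ) * K^(M-1) := by
    have : (0:ℝ) < (M:ℝ) := by exact_mod_cast Nat.lt_of_lt_of_le two_pos hM
    exact mul_pos this (pow_pos hKpos _)
  have key : ∀ t', j ≤ t' → t' < j' →
      ((M:ℝ) * K^(M-1))⁻¹ * dlen G F n i ≤ dlen G F (n+1) t' := by
    intro t' h1 h2'
    have ht'pos : 0 < dlen G F (n+1) t' := hpos (n+1) t' (by omega)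
    have hterm : ∀ s ∈ Finset.range c,
        dlen G F (n+1) (j+s) ≤ K^(M-1) * dlen G F (n+1) t' := by
      intro s hs
      simp only [Finset.mem_range] at hs
      exact chain' hK hpos hadj (by omega) (by omega) (by omega)
    have hsum_le : dlen G F n i ≤ (M:ℝ) * K^(M-1) * dlen G F (n+1) t' := by
      rw [hparent]
      calc ∑ s ∈ Finset.range c, dlen G F (n+1) (j+s)
          ≤ ∑ _s ∈ Finset.range c, K^(M-1) * dlen G F (n+1) t' := Finset.sum_le_sum hterm
        _ = (c:ℝ) * (K^(M-1) * dlen G F (n+1) t') := by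
            rw [Finset.sum_const, Finset.card_range, nsmul_eq_mul]
        _ ≤ (M:ℝ) * (K^(M-1) * dlen G F (n+1) t') := by
            apply mul_le_mul_of_nonneg_right _ (by positivity)
            exact_mod_cast hMc
        _ = (M:ℝ) * K^(M-1) * dlen G F (n+1) t' := by ring
    rw [inv_mul_le_iff₀ hMK]
    exact le_trans hsum_le (le_of_eq (by ring))
  refine ⟨key t ht1 ht2, ?_⟩
  set t2 : ℕ := if t = j then j + 1 else j with ht2def
  have ht2mem : j ≤ t2 ∧ t2 < j' ∧ t2 ≠ t := by
    by_cases he : t = j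
    · rw [ht2def, if_pos he]; omega
    · rw [ht2def, if_neg he]; omega
  have hsib := key t2 ht2mem.1 ht2mem.2.1
  have htwo : dlen G F (n+1) t + dlen G F (n+1) t2 ≤ dlen G F n i := by
    rw [hparent]
    have hsub : ({t - j, t2 - j} : Finset ℕ) ⊆ Finset.range c := by
      intro s hs
      simp only [Finset.mem_insert, Finset.mem_singleton] at hs
      simp only [Finset.mem_range]
      omega
    have hne : t - j ≠ t2 - j := by omega
    have hss := Finset.sum_le_sum_of_subset_of_nonneg hsub
      (fun s hs _ => (hpos (n+1) (j+s) (by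
        simp only [Finset.mem_range] at hs; omega)).le)
    rw [Finset.sum_pair hne] at hss
    have e1 : j + (t - j) = t := by omega
    have e2 : j + (t2 - j) = t2 := by omega
    rw [e1, e2] at hss
    exact hss
  linarith

lemma exists_idx (G : BMGrid B M a b) (n : ℕ) {x : ℝ} (hax : a ≤ x) (hxb : x < b) :
    ∃ β, β < G.Ω n ∧ G.p n β ≤ x ∧ x < G.p n (β+1) := by
  classical
  set P : ℕ → Prop := fun β => G.p n β ≤ x with hP
  have h0 : P 0 := by rw [hP]; simp only; rw [G.left]; exact hax
  refine ⟨Nat.findGreatest P (G.Ω n - 1), ?_, ?_, ?_⟩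
  · have := Nat.findGreatest_le (P := P) (G.Ω n - 1)
    have := G.Ωpos n
    omega
  · exact Nat.findGreatest_spec (Nat.zero_le _) h0
  · set β := Nat.findGreatest P (G.Ω n - 1) with hβ
    rcases Nat.lt_or_ge (G.Ω n - 1) (β + 1) with hcase | hcase
    · have hle : β ≤ G.Ω n - 1 := Nat.findGreatest_le (P := P) _
      have : β + 1 = G.Ω n := by have := G.Ωpos n; omega
      rw [this, G.right]; exact hxb
    · have := Nat.findGreatest_is_greatest (lt_add_one β) hcase
      rw [hβ] at this
      exact lt_of_not_ge this

/-- the level-`(n+1)` interval containing `x` is a child of the level-`n` one. -/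
lemma idx_child (G : BMGrid B M a b) {n βn βn1 : ℕ} {x : ℝ}
    (hβ : βn < G.Ω n ∧ G.p n βn ≤ x ∧ x < G.p n (βn+1))
    (hβ' : βn1 < G.Ω (n+1) ∧ G.p (n+1) βn1 ≤ x ∧ x < G.p (n+1) (βn1+1)) :
    ∃ j j', j' ≤ G.Ω (n+1) ∧ G.p (n+1) j = G.p n βn ∧ G.p (n+1) j' = G.p n (βn+1) ∧
      2 ≤ j' - j ∧ j' - j ≤ M ∧ j ≤ βn1 ∧ βn1 < j' := by
  obtain ⟨j, j', hj, hj', hpj, hpj', h2, hM⟩ := G.children n βn hβ.1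
  refine ⟨j, j', hj', hpj, hpj', h2, hM, ?_, ?_⟩
  · by_contra hc
    push_neg at hc
    have h1 : G.p (n+1) (βn1+1) ≤ G.p (n+1) j := p_le G (by omega) hj
    rw [hpj] at h1
    have := lt_of_lt_of_le hβ'.2.2 h1
    exact absurd hβ.2.1 (not_le.2 this)
  · by_contra hc
    push_neg at hc
    have h1 : G.p (n+1) j' ≤ G.p (n+1) βn1 := p_le G hc (le_of_lt hβ'.1)
    rw [hpj'] at h1
    have := lt_of_le_of_lt (le_trans h1 hβ'.2.1) hβ.2.2
    exact lt_irrefl _ this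

lemma idx_step (hM : 2 ≤ M) (hK : 1 ≤ K)
    (hpos : ∀ n i, i < G.Ω n → 0 < dlen G F n i)
    (hadj : ∀ n i, i + 1 < G.Ω n →
      dlen G F n i ≤ K * dlen G F n (i+1) ∧ dlen G F n (i+1) ≤ K * dlen G F n i)
    {n βn βn1 : ℕ} {x : ℝ}
    (hβ : βn < G.Ω n ∧ G.p n βn ≤ x ∧ x < G.p n (βn+1))
    (hβ' : βn1 < G.Ω (n+1) ∧ G.p (n+1) βn1 ≤ x ∧ x < G.p (n+1) (βn1+1)) :
    ((M:ℝ) * K^(M-1))⁻¹ * dlen G F n βn ≤ dlen G F (n+1) βn1 ∧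
      dlen G F (n+1) βn1 ≤ (1 - ((M:ℝ) * K^(M-1))⁻¹) * dlen G F n βn := by
  obtain ⟨j, j', hj', hpj, hpj', h2, hMc, hjβ, hβj'⟩ := idx_child G hβ hβ'
  exact child_bounds hM hK hpos hadj hβ.1 hj' hpj hpj' h2 hMc hjβ hβj'

lemma idx_iter (hM : 2 ≤ M) (hK : 1 ≤ K)
    (hpos : ∀ n i, i < G.Ω n → 0 < dlen G F n i)
    (hadj : ∀ n i, i + 1 < G.Ω n →
      dlen G F n i ≤ K * dlen G F n (i+1) ∧ dlen G F n (i+1) ≤ K * dlen G F n i)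
    {x : ℝ} {β : ℕ → ℕ}
    (hβ : ∀ n, β n < G.Ω n ∧ G.p n (β n) ≤ x ∧ x < G.p n (β n + 1))
    (u n : ℕ) :
    ((M:ℝ) * K^(M-1))⁻¹^u * dlen G F n (β n) ≤ dlen G F (n+u) (β (n+u)) ∧
      dlen G F (n+u) (β (n+u)) ≤ (1 - ((M:ℝ) * K^(M-1))⁻¹)^u * dlen G F n (β n) := by
  have hKpos : (0:ℝ) < K := lt_of_lt_of_le one_pos hK
  have hMK : (0:ℝ) < (M:ℝ) * K^(M-1) := by
    have : (0:ℝ) < (M:ℝ) := by exact_mod_cast Nat.lt_of_lt_of_le two_pos hM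
    exact mul_pos this (pow_pos hKpos _)
  have hcK1 : ((M:ℝ) * K^(M-1))⁻¹ ≤ 1 := by
    rw [inv_le_one_iff₀]
    right
    have h1 : (1:ℝ) ≤ K^(M-1) := one_le_pow₀ hK
    have h2 : (2:ℝ) ≤ (M:ℝ) := by exact_mod_cast hM
    nlinarith
  induction u with
  | zero => simp
  | succ u ih =>
    obtain ⟨ih1, ih2⟩ := ih
    have hstep := idx_step hM hK hpos hadj (hβ (n+u)) (hβ (n+(u+1)))
    have hcKpos : (0:ℝ) < ((M:ℝ) * K^(M-1))⁻¹ := inv_pos.2 hMK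
    have hp := hpos n (β n) (hβ n).1
    have hpu := hpos (n+u) (β (n+u)) (hβ (n+u)).1
    constructor
    · calc ((M:ℝ) * K^(M-1))⁻¹^(u+1) * dlen G F n (β n)
          = ((M:ℝ) * K^(M-1))⁻¹ * (((M:ℝ) * K^(M-1))⁻¹^u * dlen G F n (β n)) := by ring
        _ ≤ ((M:ℝ) * K^(M-1))⁻¹ * dlen G F (n+u) (β (n+u)) :=
            mul_le_mul_of_nonneg_left ih1 hcKpos.le
        _ ≤ dlen G F (n+(u+1)) (β (n+(u+1))) := hstep.1
    · calc dlen G F (n+(u+1)) (β (n+(u+1)))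
          ≤ (1 - ((M:ℝ) * K^(M-1))⁻¹) * dlen G F (n+u) (β (n+u)) := hstep.2
        _ ≤ (1 - ((M:ℝ) * K^(M-1))⁻¹) * ((1 - ((M:ℝ) * K^(M-1))⁻¹)^u * dlen G F n (β n)) :=
            mul_le_mul_of_nonneg_left ih2 (by linarith)
        _ = (1 - ((M:ℝ) * K^(M-1))⁻¹)^(u+1) * dlen G F n (β n) := by ring

lemma right_upper (hmonoF : MonotoneOn F (Set.Icc a b)) (hK : 1 ≤ K)
    (hpos : ∀ n i, i < G.Ω n → 0 < dlen G F n i)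
    (hadj : ∀ n i, i + 1 < G.Ω n →
      dlen G F n i ≤ K * dlen G F n (i+1) ∧ dlen G F n (i+1) ≤ K * dlen G F n i)
    {n βn : ℕ} {x s : ℝ} (hβ : βn < G.Ω n) (hx : G.p n βn ≤ x)
    (hx1 : x ≤ G.p n (βn+1)) (hs0 : 0 ≤ s)
    (hxs : x + s ≤ b) (hs : B * s ≤ dlen G (fun y => y) n βn) :
    F (x + s) - F x ≤ (1 + K) * dlen G F n βn := by
  have hB : (1:ℝ) ≤ B := one_le_B G
  have hL : dlen G (fun y => y) n βn = G.p n (βn+1) - G.p n βn := rfl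
  have haq : a ≤ G.p n βn := a_le_p G (le_of_lt hβ)
  have hxm : x ∈ Set.Icc a b := ⟨le_trans haq hx, by linarith⟩
  have hxsm : x + s ∈ Set.Icc a b := ⟨by linarith [hxm.1], hxs⟩
  have hqm : G.p n βn ∈ Set.Icc a b := p_mem G (le_of_lt hβ)
  have hq1m : G.p n (βn+1) ∈ Set.Icc a b := p_mem G hβ
  have hFpos := hpos n βn hβ
  have hFx : F (G.p n βn) ≤ F x := hmonoF hqm hxm hx
  rcases le_or_gt (x + s) (G.p n (βn+1)) with hc | hc
  · have h1 : F (x+s) ≤ F (G.p n (βn+1)) := hmonoF hxsm hq1m hc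
    have : F (x+s) - F x ≤ dlen G F n βn := by
      simp only [dlen]; linarith
    nlinarith
  · have hβ1 : βn + 1 < G.Ω n := by
      by_contra hcc
      have : βn + 1 = G.Ω n := by omega
      rw [this, G.right] at hc
      linarith
    have hlen := (len_adj G hβ1).1
    have hL1 : dlen G id n (βn+1) = G.p n (βn+2) - G.p n (βn+1) := rfl
    have hL0 : dlen G id n βn = G.p n (βn+1) - G.p n βn := rfl
    rw [hL1, hL0] at hlen
    rw [hL] at hs
    -- s ≤ L(βn+1)
    have hsL1 : s ≤ G.p n (βn+2) - G.p n (βn+1) := by nlinarith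
    have hxs2 : x + s ≤ G.p n (βn+2) := by linarith [hx1]
    have hq2m : G.p n (βn+2) ∈ Set.Icc a b := p_mem G (by omega)
    have h1 : F (x+s) ≤ F (G.p n (βn+2)) := hmonoF hxsm hq2m hxs2
    have hadj' := (hadj n βn hβ1).2
    have e1 : dlen G F n βn = F (G.p n (βn+1)) - F (G.p n βn) := rfl
    have e2 : dlen G F n (βn+1) = F (G.p n (βn+2)) - F (G.p n (βn+1)) := rfl
    rw [e1, e2] at hadj'
    rw [e1]
    linarith

lemma left_upper (hmonoF : MonotoneOn F (Set.Icc a b)) (hK : 1 ≤ K)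
    (hpos : ∀ n i, i < G.Ω n → 0 < dlen G F n i)
    (hadj : ∀ n i, i + 1 < G.Ω n →
      dlen G F n i ≤ K * dlen G F n (i+1) ∧ dlen G F n (i+1) ≤ K * dlen G F n i)
    {n βn : ℕ} {x s : ℝ} (hβ : βn < G.Ω n) (hx : G.p n βn ≤ x)
    (hx1 : x ≤ G.p n (βn+1)) (hs0 : 0 ≤ s)
    (hsa : a ≤ x - s) (hs : B * s ≤ dlen G (fun y => y) n βn) :
    F x - F (x - s) ≤ (1 + K) * dlen G F n βn := by
  have hB : (1:ℝ) ≤ B := one_le_B G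
  have hL : dlen G (fun y => y) n βn = G.p n (βn+1) - G.p n βn := rfl
  have hq1m : G.p n (βn+1) ∈ Set.Icc a b := p_mem G hβ
  have hqm : G.p n βn ∈ Set.Icc a b := p_mem G (le_of_lt hβ)
  have hxm : x ∈ Set.Icc a b := ⟨by linarith, le_trans hx1 hq1m.2⟩
  have hxsm : x - s ∈ Set.Icc a b := ⟨hsa, by linarith [hxm.2]⟩
  have hFpos := hpos n βn hβ
  have hFx : F x ≤ F (G.p n (βn+1)) := hmonoF hxm hq1m hx1
  rcases le_or_gt (G.p n βn) (x - s) with hc | hc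
  · have h1 : F (G.p n βn) ≤ F (x-s) := hmonoF hqm hxsm hc
    have : F x - F (x-s) ≤ dlen G F n βn := by
      simp only [dlen]; linarith
    nlinarith
  · obtain ⟨m, rfl⟩ : ∃ m, βn = m + 1 := by
      rcases Nat.eq_zero_or_pos βn with h0 | h0
      · exfalso; rw [h0, G.left] at hc; linarith
      · exact ⟨βn - 1, by omega⟩
    have hβ1 : m + 1 < G.Ω n := hβ
    have hlen := (len_adj G (show m + 1 < G.Ω n from hβ1)).2
    have hL1 : dlen G id n (m+1) = G.p n (m+2) - G.p n (m+1) := rfl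
    have hL0 : dlen G id n m = G.p n (m+1) - G.p n m := rfl
    rw [hL1, hL0] at hlen
    rw [hL] at hs
    have hsL1 : s ≤ G.p n (m+1) - G.p n m := by nlinarith
    have hxs2 : G.p n m ≤ x - s := by
      have : G.p n (m+1) ≤ x := hx
      linarith
    have hq0m : G.p n m ∈ Set.Icc a b := p_mem G (by omega)
    have h1 : F (G.p n m) ≤ F (x - s) := hmonoF hq0m hxsm hxs2
    have hadj' := (hadj n m hβ1).1
    have e1 : dlen G F n (m+1) = F (G.p n (m+2)) - F (G.p n (m+1)) := rfl
    have e2 : dlen G F n m = F (G.p n (m+1)) - F (G.p n m) := rfl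
    rw [e2, e1] at hadj'
    rw [e1]
    linarith

lemma right_lower (hmonoF : MonotoneOn F (Set.Icc a b)) (hK : 1 ≤ K)
    (hpos : ∀ n i, i < G.Ω n → 0 < dlen G F n i)
    (hadj : ∀ n i, i + 1 < G.Ω n →
      dlen G F n i ≤ K * dlen G F n (i+1) ∧ dlen G F n (i+1) ≤ K * dlen G F n i)
    {n βn : ℕ} {x s : ℝ} (hβ : βn < G.Ω n) (hx : G.p n βn ≤ x)
    (hx1 : x ≤ G.p n (βn+1)) (hxs : x + s ≤ b)
    (hs : 2 * B * dlen G (fun y => y) n βn ≤ s) :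
    K⁻¹ * dlen G F n βn ≤ F (x + s) - F x := by
  have hB : (1:ℝ) ≤ B := one_le_B G
  have hKpos : (0:ℝ) < K := lt_of_lt_of_le one_pos hK
  have hL : dlen G (fun y => y) n βn = G.p n (βn+1) - G.p n βn := rfl
  have hLpos : 0 < G.p n (βn+1) - G.p n βn := sub_pos.2 (G.mono n βn hβ)
  rw [hL] at hs
  have hβ1 : βn + 1 < G.Ω n := by
    by_contra hcc
    have he : βn + 1 = G.Ω n := by omega
    have : G.p n (βn+1) = b := by rw [he, G.right]
    nlinarith
  have hlen := (len_adj G hβ1).2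
  have hL1 : dlen G id n (βn+1) = G.p n (βn+2) - G.p n (βn+1) := rfl
  have hL0 : dlen G id n βn = G.p n (βn+1) - G.p n βn := rfl
  rw [hL1, hL0] at hlen
  have hp2 : G.p n (βn+2) ≤ x + s := by nlinarith
  have haq : a ≤ G.p n βn := a_le_p G (le_of_lt hβ)
  have hxm : x ∈ Set.Icc a b := ⟨le_trans haq hx, le_trans hx1 (p_le_b G hβ1.le)⟩
  have hxsm : x + s ∈ Set.Icc a b := ⟨by nlinarith [hxm.1], hxs⟩
  have h1 : F (G.p n (βn+2)) ≤ F (x+s) := hmonoF (p_mem G (by omega)) hxsm hp2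
  have h2 : F x ≤ F (G.p n (βn+1)) := hmonoF hxm (p_mem G hβ1.le) hx1
  have hadj' := (hadj n βn hβ1).1
  have e1 : dlen G F n βn = F (G.p n (βn+1)) - F (G.p n βn) := rfl
  have e2 : dlen G F n (βn+1) = F (G.p n (βn+2)) - F (G.p n (βn+1)) := rfl
  rw [e1, e2] at hadj'
  rw [e1, inv_mul_le_iff₀ hKpos]
  nlinarith

lemma left_lower (hmonoF : MonotoneOn F (Set.Icc a b)) (hK : 1 ≤ K)
    (hpos : ∀ n i, i < G.Ω n → 0 < dlen G F n i)
    (hadj : ∀ n i, i + 1 < G.Ω n →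
      dlen G F n i ≤ K * dlen G F n (i+1) ∧ dlen G F n (i+1) ≤ K * dlen G F n i)
    {n βn : ℕ} {x s : ℝ} (hβ : βn < G.Ω n) (hx : G.p n βn ≤ x)
    (hx1 : x ≤ G.p n (βn+1)) (hsa : a ≤ x - s)
    (hs : 2 * B * dlen G (fun y => y) n βn ≤ s) :
    K⁻¹ * dlen G F n βn ≤ F x - F (x - s) := by
  have hB : (1:ℝ) ≤ B := one_le_B G
  have hKpos : (0:ℝ) < K := lt_of_lt_of_le one_pos hK
  have hL : dlen G (fun y => y) n βn = G.p n (βn+1) - G.p n βn := rfl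
  have hLpos : 0 < G.p n (βn+1) - G.p n βn := sub_pos.2 (G.mono n βn hβ)
  rw [hL] at hs
  obtain ⟨m, rfl⟩ : ∃ m, βn = m + 1 := by
    rcases Nat.eq_zero_or_pos βn with h0 | h0
    · exfalso
      have hpa : G.p n 0 = a := G.left n
      rw [h0] at hx1 hLpos hs
      rw [hpa] at hLpos hs
      nlinarith [hx1, hsa, hB]
    · exact ⟨βn - 1, by omega⟩
  have hlen := (len_adj G (show m + 1 < G.Ω n from hβ)).1
  have hL1 : dlen G id n (m+1) = G.p n (m+2) - G.p n (m+1) := rfl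
  have hL0 : dlen G id n m = G.p n (m+1) - G.p n m := rfl
  rw [hL0, hL1] at hlen
  have hp2 : x - s ≤ G.p n m := by nlinarith
  have hxm : x ∈ Set.Icc a b := ⟨le_trans (a_le_p G (le_of_lt hβ)) hx,
    le_trans hx1 (p_le_b G hβ)⟩
  have hxsm : x - s ∈ Set.Icc a b := ⟨hsa, by nlinarith [hxm.2]⟩
  have h1 : F (x - s) ≤ F (G.p n m) := hmonoF hxsm (p_mem G (by omega)) hp2
  have h2 : F (G.p n (m+1)) ≤ F x := hmonoF (p_mem G hβ.le) hxm hx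
  have hadj' := (hadj n m hβ).2
  have e1 : dlen G F n (m+1) = F (G.p n (m+2)) - F (G.p n (m+1)) := rfl
  have e2 : dlen G F n m = F (G.p n (m+1)) - F (G.p n m) := rfl
  rw [e2, e1] at hadj'
  rw [e1, inv_mul_le_iff₀ hKpos]
  nlinarith

end BMGridAux


open BMGridAux in
set_option maxHeartbeats 1000000 in
/-- If `|lrd(n,β)| ≤ γ n` with `γ n → 0`, then the ratios `r_h(n,β)/r(n,β)` are
uniformly bounded between `k⁻¹` and `k` for some `k ≥ 1`; in particular `h` is
quasisymmetric. -/
theorem stmt_14 (B : ℝ) (M : ℕ) (a b : ℝ) (G : BMGrid B M a b)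
    (h : ℝ → ℝ)
    (hmono : StrictMonoOn h (Set.Icc a b)) (hcont : ContinuousOn h (Set.Icc a b))
    (γ : ℕ → ℝ) (hγ : Filter.Tendsto γ Filter.atTop (nhds 0))
    (hlrd : ∀ n β, β + 1 < G.Ω n →
      |Real.log (((h (G.p n (β + 2)) - h (G.p n (β + 1))) /
            (h (G.p n (β + 1)) - h (G.p n β))) /
          ((G.p n (β + 2) - G.p n (β + 1)) / (G.p n (β + 1) - G.p n β)))| ≤ γ n) :
    (∃ k : ℝ, 1 ≤ k ∧ ∀ n β, β + 1 < G.Ω n →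
      k⁻¹ ≤ ((h (G.p n (β + 2)) - h (G.p n (β + 1))) /
            (h (G.p n (β + 1)) - h (G.p n β))) /
          ((G.p n (β + 2) - G.p n (β + 1)) / (G.p n (β + 1) - G.p n β)) ∧
      ((h (G.p n (β + 2)) - h (G.p n (β + 1))) /
            (h (G.p n (β + 1)) - h (G.p n β))) /
          ((G.p n (β + 2) - G.p n (β + 1)) / (G.p n (β + 1) - G.p n β)) ≤ k) ∧
    (∀ d : ℝ, 1 ≤ d → ∃ kd : ℝ, 1 ≤ kd ∧
      ∀ x δ₁ δ₂ : ℝ, 0 < δ₁ → 0 < δ₂ → d⁻¹ ≤ δ₂ / δ₁ → δ₂ / δ₁ ≤ d →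
        x - δ₁ ∈ Set.Icc a b → x + δ₂ ∈ Set.Icc a b →
        |Real.log ((h (x + δ₂) - h x) / (h x - h (x - δ₁)) * (δ₁ / δ₂))| ≤
          Real.log kd) := by
  classical
  have hB1 : (1:ℝ) ≤ B := one_le_B G
  have hBpos : (0:ℝ) < B := by linarith
  have hM : 2 ≤ M := two_le_M G
  have hab : a < b := a_lt_b G
  -- boundedness of γ
  obtain ⟨Cγ, hCγmem⟩ := hγ.bddAbove_range
  have hCγ : ∀ n, γ n ≤ Cγ := fun n => hCγmem (Set.mem_range_self n)
  -- positivity of grid lengths and h-lengths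
  have hidmono : StrictMonoOn (fun y : ℝ => y) (Set.Icc a b) := fun u _ v _ huv => huv
  have Lpos : ∀ n i, i < G.Ω n → 0 < dlen G (fun y => y) n i := fun n i hi =>
    dlen_pos G hidmono hi
  have μpos : ∀ n i, i < G.Ω n → 0 < dlen G h n i := fun n i hi => dlen_pos G hmono hi
  -- the ratio expression and part 1
  have hXpos : ∀ n β, β + 1 < G.Ω n →
      0 < ((h (G.p n (β + 2)) - h (G.p n (β + 1))) / (h (G.p n (β + 1)) - h (G.p n β))) /
        ((G.p n (β + 2) - G.p n (β + 1)) / (G.p n (β + 1) - G.p n β)) := by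
    intro n β hβ
    have h1 := μpos n β (by omega)
    have h2 := μpos n (β+1) hβ
    have h3 := Lpos n β (by omega)
    have h4 := Lpos n (β+1) hβ
    have e1 : dlen G h n β = h (G.p n (β+1)) - h (G.p n β) := rfl
    have e2 : dlen G h n (β+1) = h (G.p n (β+2)) - h (G.p n (β+1)) := rfl
    have e3 : dlen G (fun y => y) n β = G.p n (β+1) - G.p n β := rfl
    have e4 : dlen G (fun y => y) n (β+1) = G.p n (β+2) - G.p n (β+1) := rfl
    rw [e1] at h1; rw [e2] at h2; rw [e3] at h3; rw [e4] at h4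
    positivity
  have hCγ0 : 0 ≤ Cγ := by
    have h2 := two_le_Ωone G
    have := le_trans (abs_nonneg _) (le_trans (hlrd 1 0 (by omega)) (hCγ 1))
    exact this
  set k : ℝ := Real.exp Cγ with hk
  have hk1 : 1 ≤ k := Real.one_le_exp hCγ0
  have part1 : ∀ n β, β + 1 < G.Ω n →
      k⁻¹ ≤ ((h (G.p n (β + 2)) - h (G.p n (β + 1))) /
            (h (G.p n (β + 1)) - h (G.p n β))) /
          ((G.p n (β + 2) - G.p n (β + 1)) / (G.p n (β + 1) - G.p n β)) ∧
      ((h (G.p n (β + 2)) - h (G.p n (β + 1))) /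
            (h (G.p n (β + 1)) - h (G.p n β))) /
          ((G.p n (β + 2) - G.p n (β + 1)) / (G.p n (β + 1) - G.p n β)) ≤ k := by
    intro n β hβ
    have hX := hXpos n β hβ
    have habs := abs_le.1 (le_trans (hlrd n β hβ) (hCγ n))
    constructor
    · rw [hk, ← Real.exp_neg]
      rw [← Real.exp_log hX]
      exact Real.exp_le_exp.2 habs.1
    · rw [hk, ← Real.exp_log hX]
      exact Real.exp_le_exp.2 habs.2
  refine ⟨⟨k, hk1, part1⟩, ?_⟩
  -- quasisymmetry
  set K : ℝ := k * B with hKdef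
  have hK1 : 1 ≤ K := one_le_mul_of_one_le_of_one_le hk1 hB1
  have hKpos : (0:ℝ) < K := by linarith
  have Ladj : ∀ n i, i + 1 < G.Ω n →
      dlen G (fun y => y) n i ≤ B * dlen G (fun y => y) n (i+1) ∧
      dlen G (fun y => y) n (i+1) ≤ B * dlen G (fun y => y) n i := fun n i hi => len_adj G hi
  have μadj : ∀ n i, i + 1 < G.Ω n →
      dlen G h n i ≤ K * dlen G h n (i+1) ∧ dlen G h n (i+1) ≤ K * dlen G h n i := by
    intro n i hi
    have h1 := μpos n i (by omega)
    have h2 := μpos n (i+1) hi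
    have h3 := Lpos n i (by omega)
    have h4 := Lpos n (i+1) hi
    have hX := hXpos n i hi
    obtain ⟨hXl, hXu⟩ := part1 n i hi
    have e1 : dlen G h n i = h (G.p n (i+1)) - h (G.p n i) := rfl
    have e2 : dlen G h n (i+1) = h (G.p n (i+2)) - h (G.p n (i+1)) := rfl
    have e3 : dlen G (fun y => y) n i = G.p n (i+1) - G.p n i := rfl
    have e4 : dlen G (fun y => y) n (i+1) = G.p n (i+2) - G.p n (i+1) := rfl
    rw [e1, e2]
    rw [e1] at h1; rw [e2] at h2; rw [e3] at h3; rw [e4] at h4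
    set μ1 := h (G.p n (i+1)) - h (G.p n i)
    set μ2 := h (G.p n (i+2)) - h (G.p n (i+1))
    set L1 := G.p n (i+1) - G.p n i
    set L2 := G.p n (i+2) - G.p n (i+1)
    have hkpos : (0:ℝ) < k := by linarith
    have hrL : L2 ≤ B * L1 ∧ L1 ≤ B * L2 := by
      have hla := Ladj n i hi
      exact ⟨hla.2, hla.1⟩
    have hXval : (μ2 / μ1) / (L2 / L1) = μ2 * L1 / (μ1 * L2) := by
      field_simp
    rw [hXval] at hXl hXu
    have hXu' : μ2 * L1 ≤ k * (μ1 * L2) := by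
      rw [div_le_iff₀ (by positivity)] at hXu; linarith
    have hXl' : μ1 * L2 ≤ k * (μ2 * L1) := by
      rw [le_div_iff₀ (by positivity)] at hXl
      have h9 := mul_le_mul_of_nonneg_left hXl hkpos.le
      rw [← mul_assoc, mul_inv_cancel₀ hkpos.ne', one_mul] at h9
      linarith
    constructor
    · have h7 : μ1 * L2 ≤ (k * B * μ2) * L2 := by
        calc μ1 * L2 ≤ k * (μ2 * L1) := hXl'
          _ = (k * μ2) * L1 := by ring
          _ ≤ (k * μ2) * (B * L2) :=
              mul_le_mul_of_nonneg_left hrL.2 (by positivity)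
          _ = (k * B * μ2) * L2 := by ring
      have h8 := le_of_mul_le_mul_right h7 h4
      rw [hKdef]; linarith
    · have h7 : μ2 * L1 ≤ (k * B * μ1) * L1 := by
        calc μ2 * L1 ≤ k * (μ1 * L2) := hXu'
          _ = (k * μ1) * L2 := by ring
          _ ≤ (k * μ1) * (B * L1) :=
              mul_le_mul_of_nonneg_left hrL.1 (by positivity)
          _ = (k * B * μ1) * L1 := by ring
      have h8 := le_of_mul_le_mul_right h7 h3
      rw [hKdef]; linarith
  -- child constants
  set cB : ℝ := ((M:ℝ) * B^(M-1))⁻¹ with hcBdef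
  set cK : ℝ := ((M:ℝ) * K^(M-1))⁻¹ with hcKdef
  have hMpos : (0:ℝ) < (M:ℝ) := by exact_mod_cast Nat.lt_of_lt_of_le two_pos hM
  have hM2 : (2:ℝ) ≤ (M:ℝ) := by exact_mod_cast hM
  have hcBpos : 0 < cB := by
    rw [hcBdef]; positivity
  have hcKpos : 0 < cK := by
    rw [hcKdef]; positivity
  have hcBhalf : cB ≤ 1/2 := by
    rw [hcBdef]
    rw [inv_le_iff_one_le_mul₀ (by positivity)]
    have : (1:ℝ) ≤ B^(M-1) := one_le_pow₀ hB1
    nlinarith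
  have hcKle : cK ≤ 1/2 := by
    rw [hcKdef]
    rw [inv_le_iff_one_le_mul₀ (by positivity)]
    have : (1:ℝ) ≤ K^(M-1) := one_le_pow₀ hK1
    nlinarith
  set θ : ℝ := 1 - cB with hθdef
  have hθpos : 0 < θ := by rw [hθdef]; linarith
  have hθlt1 : θ < 1 := by rw [hθdef]; linarith
  -- minimum at level 0
  have hΩ0 : (Finset.range (G.Ω 0)).Nonempty := ⟨0, Finset.mem_range.2 (G.Ωpos 0)⟩
  set μ0min : ℝ := (Finset.range (G.Ω 0)).inf' hΩ0 (dlen G h 0) with hμ0def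
  have hμ0pos : 0 < μ0min := by
    rw [hμ0def, Finset.lt_inf'_iff]
    intro i hi
    exact μpos 0 i (Finset.mem_range.1 hi)
  have hμ0le : ∀ i, i < G.Ω 0 → μ0min ≤ dlen G h 0 i := fun i hi =>
    Finset.inf'_le _ (Finset.mem_range.2 hi)
  set L0min : ℝ := (Finset.range (G.Ω 0)).inf' hΩ0 (dlen G (fun y => y) 0) with hL0def
  have hL0pos : 0 < L0min := by
    rw [hL0def, Finset.lt_inf'_iff]
    intro i hi
    exact Lpos 0 i (Finset.mem_range.1 hi)
  have hL0le : ∀ i, i < G.Ω 0 → L0min ≤ dlen G (fun y => y) 0 i := fun i hi =>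
    Finset.inf'_le _ (Finset.mem_range.2 hi)
  set cm : ℝ := min cB (L0min / (b - a)) with hcmdef
  have hcmpos : 0 < cm := by
    rw [hcmdef]
    exact lt_min hcBpos (div_pos hL0pos (by linarith))
  intro d hd
  have hdpos : 0 < d := lt_of_lt_of_le one_pos hd
  have hBsq : (0:ℝ) < 2 * B^2 * d := by
    have : (0:ℝ) < B^2 := pow_pos hBpos 2
    exact mul_pos (mul_pos two_pos this) hdpos
  -- choose u
  obtain ⟨u, hu⟩ : ∃ u : ℕ, θ^u < cm / (2 * B^2 * d) :=
    exists_pow_lt_of_lt_one (div_pos hcmpos hBsq) hθlt1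
  set Ccrude : ℝ := (h b - h a) / (cK^u * μ0min) with hCcrudedef
  set Cup : ℝ := max ((1+K) * (cK⁻¹)^u) Ccrude with hCupdef
  have hCup1 : 1 ≤ Cup := by
    have h1 : (1:ℝ) ≤ (1+K) * (cK⁻¹)^u := by
      have h2 : (1:ℝ) ≤ (cK⁻¹)^u := one_le_pow₀ (by
        rw [one_le_inv_iff₀]; exact ⟨hcKpos, by linarith⟩)
      exact one_le_mul_of_one_le_of_one_le (by linarith) h2
    exact le_trans h1 (le_max_left _ _)
  have hCuppos : 0 < Cup := by linarith
  refine ⟨K * Cup * d, ?_, ?_⟩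
  · exact one_le_mul_of_one_le_of_one_le (one_le_mul_of_one_le_of_one_le hK1 hCup1) hd
  intro x δ₁ δ₂ hδ₁ hδ₂ hr1 hr2 hxa hxb
  have hax : a ≤ x := by
    have := hxa.1; linarith
  have hxblt : x < b := by
    have := hxb.2; linarith
  have hxle : x ≤ b := le_of_lt hxblt
  -- the interval of x at each level
  have hspecall : ∀ n, ∃ β, β < G.Ω n ∧ G.p n β ≤ x ∧ x < G.p n (β+1) := fun n =>
    exists_idx G n hax hxblt
  choose β hβ using hspecall
  set δmin : ℝ := min δ₁ δ₂ with hδmindef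
  have hδminpos : 0 < δmin := lt_min hδ₁ hδ₂
  have h21 : δ₂ ≤ d * δ₁ := by rw [div_le_iff₀ hδ₁] at hr2; linarith
  have h12 : δ₁ ≤ d * δ₂ := by
    rw [le_div_iff₀ hδ₁] at hr1
    calc δ₁ = d * (d⁻¹ * δ₁) := by rw [← mul_assoc, mul_inv_cancel₀ hdpos.ne', one_mul]
      _ ≤ d * δ₂ := mul_le_mul_of_nonneg_left hr1 hdpos.le
  have hδ1d : δ₁ ≤ d * δmin := by
    rcases le_total δ₁ δ₂ with hc | hc
    · rw [hδmindef, min_eq_left hc]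
      exact le_mul_of_one_le_left hδ₁.le hd
    · rw [hδmindef, min_eq_right hc]; exact h12
  have hδ2d : δ₂ ≤ d * δmin := by
    rcases le_total δ₁ δ₂ with hc | hc
    · rw [hδmindef, min_eq_left hc]; exact h21
    · rw [hδmindef, min_eq_right hc]
      exact le_mul_of_one_le_left hδ₂.le hd
  set ε : ℝ := δmin / (2 * B) with hεdef
  have hεpos : 0 < ε := by rw [hεdef]; positivity
  have hδab : δmin ≤ b - a := by
    have h1 := hxa.1
    have h2 := hxb.2
    rw [hδmindef]
    rcases le_total δ₁ δ₂ with hc | hc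
    · rw [min_eq_left hc]; linarith
    · rw [min_eq_right hc]; linarith
  -- existence of a fine enough level
  have hLdecay : ∀ n, dlen G (fun y => y) n (β n) ≤ θ^n * (b - a) := by
    intro n
    have := (idx_iter (G := G) (F := fun y => y) (K := B) hM hB1 Lpos Ladj hβ n 0).2
    simp only [Nat.zero_add] at this
    calc dlen G (fun y => y) n (β n) ≤ θ^n * dlen G (fun y => y) 0 (β 0) := this
      _ ≤ θ^n * (b - a) := by
          apply mul_le_mul_of_nonneg_left _ (le_of_lt (pow_pos hθpos n))
          have e : dlen G (fun y => y) 0 (β 0) = G.p 0 (β 0 + 1) - G.p 0 (β 0) := rfl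
          rw [e]
          have h1 := a_le_p G (le_of_lt (hβ 0).1)
          have h2 := p_le_b G (show β 0 + 1 ≤ G.Ω 0 from (hβ 0).1)
          linarith
  have hPex : ∃ n, dlen G (fun y => y) n (β n) ≤ ε := by
    obtain ⟨n0, hn0⟩ := exists_pow_lt_of_lt_one (div_pos hεpos (show (0:ℝ) < b - a by linarith)) hθlt1
    refine ⟨n0, le_trans (hLdecay n0) ?_⟩
    rw [lt_div_iff₀ (show (0:ℝ) < b - a by linarith)] at hn0
    linarith
  -- minimal fine level
  obtain ⟨m, hmle, hmlow⟩ : ∃ m, dlen G (fun y => y) m (β m) ≤ ε ∧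
      cm * ε ≤ dlen G (fun y => y) m (β m) := by
    refine ⟨Nat.find hPex, Nat.find_spec hPex, ?_⟩
    rcases Nat.eq_zero_or_pos (Nat.find hPex) with h0 | h0
    · rw [h0]
      have h1 : L0min ≤ dlen G (fun y => y) 0 (β 0) := hL0le _ (hβ 0).1
      have hcm2 : cm ≤ L0min / (b - a) := min_le_right _ _
      have hba : (0:ℝ) < b - a := by linarith
      have hε2 : ε ≤ b - a := by
        rw [hεdef, div_le_iff₀ (by positivity)]
        have h9 : (b-a) ≤ (b-a)*(2*B) := le_mul_of_one_le_right (by linarith) (by linarith)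
        linarith
      have h2 : cm * ε ≤ (L0min / (b - a)) * (b - a) :=
        mul_le_mul hcm2 hε2 hεpos.le (by positivity)
      rw [div_mul_cancel₀ _ hba.ne'] at h2
      linarith
    · obtain ⟨m', hm'⟩ : ∃ m', Nat.find hPex = m' + 1 := ⟨Nat.find hPex - 1, by omega⟩
      have hmin : ε < dlen G (fun y => y) m' (β m') := by
        have hnm := Nat.find_min hPex (show m' < Nat.find hPex by omega)
        push_neg at hnm; exact hnm
      have hstep := (idx_step (G:=G) (F:=fun y => y) (K:=B) hM hB1 Lpos Ladj
        (hβ m') (hβ (m'+1))).1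
      rw [← hcBdef] at hstep
      rw [hm']
      have h5 : cm ≤ cB := min_le_left _ _
      calc cm * ε ≤ cB * dlen G (fun y => y) m' (β m') := by
            have h7 := mul_le_mul_of_nonneg_right h5 hεpos.le
            have h8 := mul_le_mul_of_nonneg_left hmin.le hcBpos.le
            linarith
        _ ≤ dlen G (fun y => y) (m'+1) (β (m'+1)) := hstep
  have hLmpos : 0 < dlen G (fun y => y) m (β m) := Lpos m (β m) (hβ m).1
  have hμmpos : 0 < dlen G h m (β m) := μpos m (β m) (hβ m).1
  have hεsmall : 2 * B * dlen G (fun y => y) m (β m) ≤ δmin := by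
    rw [hεdef, le_div_iff₀ (by positivity)] at hmle
    linarith
  have hδ1min : δmin ≤ δ₁ := min_le_left _ _
  have hδ2min : δmin ≤ δ₂ := min_le_right _ _
  -- lower bounds
  have hDlow : K⁻¹ * dlen G h m (β m) ≤ h x - h (x - δ₁) :=
    left_lower hmono.monotoneOn hK1 μpos μadj (hβ m).1 (hβ m).2.1
      (le_of_lt (hβ m).2.2) hxa.1 (by linarith)
  have hNlow : K⁻¹ * dlen G h m (β m) ≤ h (x + δ₂) - h x :=
    right_lower hmono.monotoneOn hK1 μpos μadj (hβ m).1 (hβ m).2.1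
      (le_of_lt (hβ m).2.2) hxb.2 (by linarith)
  -- upper bounds
  have hupper : (h (x + δ₂) - h x ≤ Cup * dlen G h m (β m)) ∧
      (h x - h (x - δ₁) ≤ Cup * dlen G h m (β m)) := by
    rcases Nat.lt_or_ge m u with hmu | hmu
    · -- crude case: m < u
      have hμlow : cK^u * μ0min ≤ dlen G h m (β m) := by
        have hiter := (idx_iter (G:=G) (F:=h) (K:=K) hM hK1 μpos μadj hβ m 0).1
        simp only [Nat.zero_add] at hiter
        rw [← hcKdef] at hiter
        have h1 : μ0min ≤ dlen G h 0 (β 0) := hμ0le _ (hβ 0).1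
        have h2 : cK^u ≤ cK^m :=
          pow_le_pow_of_le_one hcKpos.le (by linarith) (by omega)
        calc cK^u * μ0min ≤ cK^m * dlen G h 0 (β 0) := by
              apply mul_le_mul h2 h1 hμ0pos.le (by positivity)
          _ ≤ dlen G h m (β m) := hiter
      have hCcm : Ccrude * (cK^u * μ0min) = h b - h a := by
        rw [hCcrudedef]
        field_simp
      have hba2 : h a ≤ h x := by
        rcases eq_or_lt_of_le hax with he | hlt
        · rw [he]
        · exact le_of_lt (hmono ⟨le_rfl, hab.le⟩ ⟨hax, hxle⟩ hlt)
      have hbb2 : h (x + δ₂) ≤ h b := by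
        rcases eq_or_lt_of_le hxb.2 with he | hlt
        · rw [he]
        · exact le_of_lt (hmono hxb ⟨hab.le, le_rfl⟩ hlt)
      have hba3 : h (x - δ₁) ≥ h a := by
        rcases eq_or_lt_of_le hxa.1 with he | hlt
        · rw [← he]
        · exact le_of_lt (hmono ⟨le_rfl, hab.le⟩ hxa hlt)
      have hbb3 : h x ≤ h b := by
        rcases eq_or_lt_of_le hxle with he | hlt
        · rw [he]
        · exact le_of_lt (hmono ⟨hax, hxle⟩ ⟨hab.le, le_rfl⟩ hlt)
      have hCcnn : 0 ≤ Ccrude := by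
        rw [hCcrudedef]
        apply div_nonneg _ (by positivity)
        have := a_lt_b G
        have h9 : h a < h b := hmono ⟨le_rfl, hab.le⟩ ⟨hab.le, le_rfl⟩ hab
        linarith
      have hkey : h b - h a ≤ Ccrude * dlen G h m (β m) := by
        rw [← hCcm]
        exact mul_le_mul_of_nonneg_left hμlow hCcnn
      have hCC : Ccrude * dlen G h m (β m) ≤ Cup * dlen G h m (β m) :=
        mul_le_mul_of_nonneg_right (le_max_right _ _) hμmpos.le
      constructor
      · linarith
      · linarith
    · -- regular case: u ≤ m
      have e : m - u + u = m := by omega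
      have hiterL := (idx_iter (G:=G) (F:=fun y => y) (K:=B) hM hB1 Lpos Ladj hβ u (m-u)).2
      rw [e, ← hcBdef] at hiterL
      -- hiterL : dlen m ≤ θ^u * dlen (m-u)
      have hθu : (0:ℝ) < θ^u := pow_pos hθpos u
      have hδeq : δmin = 2 * B * ε := by
        rw [hεdef]; field_simp
      have hLmu : B * (d * δmin) ≤ dlen G (fun y => y) (m-u) (β (m-u)) := by
        have h1 : θ^u * (2 * B^2 * d) < cm := by
          rw [lt_div_iff₀ hBsq] at hu; exact hu
        have h2 : θ^u * (2 * B^2 * d) * ε < cm * ε := by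
          apply mul_lt_mul_of_pos_right h1 hεpos
        have h3 : θ^u * (2 * B^2 * d * ε) < θ^u * dlen G (fun y => y) (m-u) (β (m-u)) := by
          calc θ^u * (2 * B^2 * d * ε) = θ^u * (2 * B^2 * d) * ε := by ring
            _ < cm * ε := h2
            _ ≤ dlen G (fun y => y) m (β m) := hmlow
            _ ≤ θ^u * dlen G (fun y => y) (m-u) (β (m-u)) := hiterL
        have h4 := lt_of_mul_lt_mul_left h3 hθu.le
        calc B * (d * δmin) = 2 * B^2 * d * ε := by rw [hδeq]; ring
          _ ≤ dlen G (fun y => y) (m-u) (β (m-u)) := h4.le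
      have hiterμ := (idx_iter (G:=G) (F:=h) (K:=K) hM hK1 μpos μadj hβ u (m-u)).1
      rw [e, ← hcKdef] at hiterμ
      -- hiterμ : cK^u * dlen h (m-u) ≤ dlen h m
      have hμmu : dlen G h (m-u) (β (m-u)) ≤ (cK⁻¹)^u * dlen G h m (β m) := by
        have hcku : (0:ℝ) < cK^u := pow_pos hcKpos u
        have h9 := mul_le_mul_of_nonneg_left hiterμ (inv_nonneg.2 hcku.le)
        rw [← mul_assoc, inv_mul_cancel₀ hcku.ne', one_mul] at h9
        rw [inv_pow]
        exact h9
      have hCupl : (1+K) * (cK⁻¹)^u ≤ Cup := le_max_left _ _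
      have hNup : h (x + δ₂) - h x ≤ Cup * dlen G h m (β m) := by
        have hru := right_upper hmono.monotoneOn hK1 μpos μadj (hβ (m-u)).1
          (hβ (m-u)).2.1 (le_of_lt (hβ (m-u)).2.2) hδ₂.le hxb.2
          (by have h9 := mul_le_mul_of_nonneg_left hδ2d hBpos.le; linarith [hLmu])
        calc h (x + δ₂) - h x ≤ (1+K) * dlen G h (m-u) (β (m-u)) := hru
          _ ≤ (1+K) * ((cK⁻¹)^u * dlen G h m (β m)) :=
              mul_le_mul_of_nonneg_left hμmu (by linarith)
          _ = (1+K) * (cK⁻¹)^u * dlen G h m (β m) := by ring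
          _ ≤ Cup * dlen G h m (β m) :=
              mul_le_mul_of_nonneg_right hCupl hμmpos.le
      have hDup : h x - h (x - δ₁) ≤ Cup * dlen G h m (β m) := by
        have hlu := left_upper hmono.monotoneOn hK1 μpos μadj (hβ (m-u)).1
          (hβ (m-u)).2.1 (le_of_lt (hβ (m-u)).2.2) hδ₁.le hxa.1
          (by have h9 := mul_le_mul_of_nonneg_left hδ1d hBpos.le; linarith [hLmu])
        calc h x - h (x - δ₁) ≤ (1+K) * dlen G h (m-u) (β (m-u)) := hlu
          _ ≤ (1+K) * ((cK⁻¹)^u * dlen G h m (β m)) :=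
              mul_le_mul_of_nonneg_left hμmu (by linarith)
          _ = (1+K) * (cK⁻¹)^u * dlen G h m (β m) := by ring
          _ ≤ Cup * dlen G h m (β m) :=
              mul_le_mul_of_nonneg_right hCupl hμmpos.le
      exact ⟨hNup, hDup⟩
  obtain ⟨hNup, hDup⟩ := hupper
  -- combine
  have hNpos : 0 < h (x + δ₂) - h x := by
    have := hmono ⟨hax, hxle⟩ hxb (by linarith)
    linarith
  have hDpos : 0 < h x - h (x - δ₁) := by
    have := hmono hxa ⟨hax, hxle⟩ (by linarith)
    linarith
  have hKK : K * K⁻¹ = 1 := mul_inv_cancel₀ hKpos.ne'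
  have hRup : (h (x + δ₂) - h x) / (h x - h (x - δ₁)) ≤ K * Cup := by
    rw [div_le_iff₀ hDpos]
    have h1 : K * Cup * (K⁻¹ * dlen G h m (β m)) = Cup * dlen G h m (β m) := by
      field_simp
    have h2 : K * Cup * (K⁻¹ * dlen G h m (β m)) ≤ K * Cup * (h x - h (x - δ₁)) :=
      mul_le_mul_of_nonneg_left hDlow (by positivity)
    linarith
  have hRlow : (K * Cup)⁻¹ ≤ (h (x + δ₂) - h x) / (h x - h (x - δ₁)) := by
    rw [le_div_iff₀ hDpos]
    have h1 : (K * Cup)⁻¹ * (Cup * dlen G h m (β m)) = K⁻¹ * dlen G h m (β m) := by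
      rw [mul_inv]
      field_simp
    have h2 : (K * Cup)⁻¹ * (h x - h (x - δ₁)) ≤ (K * Cup)⁻¹ * (Cup * dlen G h m (β m)) :=
      mul_le_mul_of_nonneg_left hDup (by positivity)
    linarith
  have hq1 : δ₁ / δ₂ ≤ d := by
    rw [div_le_iff₀ hδ₂]; linarith
  have hq2 : d⁻¹ ≤ δ₁ / δ₂ := by
    rw [le_div_iff₀ hδ₂]
    have h9 := mul_le_mul_of_nonneg_left h21 (inv_nonneg.2 hdpos.le)
    rw [← mul_assoc, inv_mul_cancel₀ hdpos.ne', one_mul] at h9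
    linarith
  have hTup : (h (x + δ₂) - h x) / (h x - h (x - δ₁)) * (δ₁ / δ₂) ≤ K * Cup * d := by
    apply mul_le_mul hRup hq1 (by positivity) (by positivity)
  have hTlow : (K * Cup * d)⁻¹ ≤ (h (x + δ₂) - h x) / (h x - h (x - δ₁)) * (δ₁ / δ₂) := by
    rw [mul_inv]
    apply mul_le_mul hRlow hq2 (by positivity) (le_trans (by positivity) hRlow)
  have hTpos : 0 < (h (x + δ₂) - h x) / (h x - h (x - δ₁)) * (δ₁ / δ₂) := by positivity
  have hkdpos : (0:ℝ) < K * Cup * d := by positivity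
  rw [abs_le]
  constructor
  · rw [← Real.log_inv]
    exact Real.log_le_log (by positivity) hTlow
  · exact Real.log_le_log hTpos hTup
end

section
/- Let B ≥ 1, γ ∈ (0,1), ε > 1, and suppose sequences (a_i)_{i≥0}, (b_i)_{i≥0}, (r_i)_{i≥1} of positive reals satisfy a_0 ≥ ε, γ ≤ b_i ≤ γ^{-1}, B^{-1} ≤ r_i ≤ B, and a_i − 1 ≥ r_i·( b_{i-1}·(a_{i-1} − 1) + b_{i-1} − 1 ) for all i ≥ 1. Then for all i ≥ 1, a_i − 1 ≥ (ε−1)γ^i·∏_{k=1}^{i} r_k + B(γ−1)·(1 − (Bγ^{-1})^i)/(1 − Bγ^{-1}). -/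
lemma geom_step_aux (x c : ℝ) (hx : 1 - x ≠ 0) (i : ℕ) :
    c * (1 - x ^ (i + 1)) / (1 - x) = x * (c * (1 - x ^ i) / (1 - x)) + c := by
  field_simp
  ring

/-- The inductive estimate of Lemma 3.8(ii): from the recursive lower bound
`a i - 1 ≥ r i * (b (i-1) * (a (i-1) - 1) + b (i-1) - 1)` one obtains the
closed-form lower bound
`a i - 1 ≥ (ε-1) γ^i ∏_{k=1}^i r k + B (γ-1) (1 - (Bγ⁻¹)^i)/(1 - Bγ⁻¹)`. -/
theorem stmt_15 (B γ ε : ℝ) (hB : 1 ≤ B) (hγ0 : 0 < γ) (hγ1 : γ < 1) (hε : 1 < ε)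
    (a b r : ℕ → ℝ)
    (hapos : ∀ i, 0 < a i)
    (ha0 : ε ≤ a 0)
    (hb : ∀ i, γ ≤ b i ∧ b i ≤ γ⁻¹)
    (hr : ∀ i, 1 ≤ i → B⁻¹ ≤ r i ∧ r i ≤ B)
    (hrec : ∀ i, 1 ≤ i →
      a i - 1 ≥ r i * (b (i - 1) * (a (i - 1) - 1) + b (i - 1) - 1)) :
    ∀ i, 1 ≤ i →
      a i - 1 ≥ (ε - 1) * γ ^ i * (∏ k ∈ Finset.Icc 1 i, r k) +
        B * (γ - 1) * (1 - (B * γ⁻¹) ^ i) / (1 - B * γ⁻¹) := by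
  have hγi : 1 < γ⁻¹ := one_lt_inv_iff₀.mpr ⟨hγ0, hγ1⟩
  have hγipos : 0 < γ⁻¹ := by linarith
  have hBpos : 0 < B := by linarith
  have hBi : 0 < B⁻¹ := by positivity
  have hx1 : 1 < B * γ⁻¹ := by nlinarith
  have hxne : 1 - B * γ⁻¹ ≠ 0 := by intro h; nlinarith
  have hrpos : ∀ k, 1 ≤ k → 0 < r k := fun k hk => lt_of_lt_of_le hBi (hr k hk).1
  -- nonpositivity of the geometric term
  have hSle : ∀ i : ℕ, B * (γ - 1) * (1 - (B * γ⁻¹) ^ i) / (1 - B * γ⁻¹) ≤ 0 := by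
    intro i
    have hxi : 1 ≤ (B * γ⁻¹) ^ i := one_le_pow₀ hx1.le
    apply div_nonpos_of_nonneg_of_nonpos
    · have h := mul_nonneg (mul_nonneg hBpos.le (by linarith : (0:ℝ) ≤ 1 - γ))
        (by linarith : (0:ℝ) ≤ (B * γ⁻¹) ^ i - 1)
      nlinarith [h]
    · linarith
  -- recursion for the geometric term
  have hSrec : ∀ i : ℕ, B * (γ - 1) * (1 - (B * γ⁻¹) ^ (i + 1)) / (1 - B * γ⁻¹) =
      (B * γ⁻¹) * (B * (γ - 1) * (1 - (B * γ⁻¹) ^ i) / (1 - B * γ⁻¹)) + B * (γ - 1) :=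
    fun i => geom_step_aux (B * γ⁻¹) (B * (γ - 1)) hxne i
  -- key estimate r * (b - 1) ≥ B * (γ - 1)
  have hkey : ∀ rr bb : ℝ, B⁻¹ ≤ rr → rr ≤ B → γ ≤ bb → B * (γ - 1) ≤ rr * (bb - 1) := by
    intro rr bb h1 h2 h3
    rcases le_or_gt 1 bb with h | h
    · have : 0 ≤ rr * (bb - 1) := mul_nonneg (le_trans hBi.le h1) (by linarith)
      nlinarith
    · nlinarith
  intro i hi
  induction i, hi using Nat.le_induction with
  | base =>
    have h1 := hrec 1 le_rfl
    simp only [Finset.Icc_self, Finset.prod_singleton, pow_one]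
    have hr1 := hr 1 le_rfl
    have hb0 := hb 0
    have h2 : B * (γ - 1) ≤ r 1 * (b 0 - 1) := hkey _ _ hr1.1 hr1.2 hb0.1
    have hr1pos : 0 < r 1 := hrpos 1 le_rfl
    have h3 : γ * (ε - 1) ≤ b 0 * (a 0 - 1) := by nlinarith
    have h4 : r 1 * (γ * (ε - 1)) ≤ r 1 * (b 0 * (a 0 - 1)) :=
      mul_le_mul_of_nonneg_left h3 hr1pos.le
    have h5 : B * (γ - 1) * (1 - B * γ⁻¹) / (1 - B * γ⁻¹) = B * (γ - 1) := by
      rw [mul_div_assoc, div_self hxne, mul_one]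
    rw [h5]
    simp only [Nat.sub_self] at h1
    nlinarith
  | succ n hn ih =>
    have hPpos : 0 < ∏ k ∈ Finset.Icc 1 n, r k :=
      Finset.prod_pos fun k hk => hrpos k (Finset.mem_Icc.mp hk).1
    have h1 := hrec (n + 1) (by omega)
    simp only [Nat.add_sub_cancel] at h1
    have hrn := hr (n + 1) (by omega)
    have hbn := hb n
    have hrnpos : 0 < r (n + 1) := hrpos (n + 1) (by omega)
    have hbpos : 0 < b n := lt_of_lt_of_le hγ0 hbn.1
    set S := B * (γ - 1) * (1 - (B * γ⁻¹) ^ n) / (1 - B * γ⁻¹) with hS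
    set U := (ε - 1) * γ ^ n * ∏ k ∈ Finset.Icc 1 n, r k with hU
    have hUpos : 0 ≤ U := by
      have : (0:ℝ) ≤ γ ^ n := by positivity
      apply mul_nonneg (mul_nonneg (by linarith) this) hPpos.le
    have hSle' : S ≤ 0 := hSle n
    have hrb : r (n + 1) * b n ≤ B * γ⁻¹ :=
      mul_le_mul hrn.2 hbn.2 hbpos.le hBpos.le
    have hchain : r (n + 1) * (b n * (a n - 1)) ≥
        γ * r (n + 1) * U + (B * γ⁻¹) * S := by
      have h2 : r (n + 1) * b n * (a n - 1) ≥ r (n + 1) * b n * (U + S) :=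
        mul_le_mul_of_nonneg_left ih (by positivity)
      have h3 : r (n + 1) * b n * U ≥ γ * r (n + 1) * U := by
        nlinarith [mul_nonneg (mul_nonneg (sub_nonneg.mpr hbn.1) hrnpos.le) hUpos]
      have h4 : r (n + 1) * b n * S ≥ (B * γ⁻¹) * S :=
        mul_le_mul_of_nonpos_right hrb hSle'
      nlinarith
    have h6 : B * (γ - 1) ≤ r (n + 1) * (b n - 1) := hkey _ _ hrn.1 hrn.2 hbn.1
    have hprod : ∏ k ∈ Finset.Icc 1 (n + 1), r k = (∏ k ∈ Finset.Icc 1 n, r k) * r (n + 1) :=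
      Finset.prod_Icc_succ_top (by omega) r
    rw [hprod, hSrec n, ← hS]
    have heq : (ε - 1) * γ ^ (n + 1) * ((∏ k ∈ Finset.Icc 1 n, r k) * r (n + 1)) =
        γ * r (n + 1) * U := by rw [hU]; ring
    rw [heq]
    have hdist : r (n + 1) * (b n * (a n - 1) + b n - 1) =
        r (n + 1) * (b n * (a n - 1)) + r (n + 1) * (b n - 1) := by ring
    rw [hdist] at h1
    linarith
end
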